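/- arXiv:1307.4156 — 4 statements merged into one kernel-verified Lean document; each statement's English description precedes it below -/
import Mathlib

section
/- Let v ∈ ℝⁿ, λ > 0 and q ∈ [1,∞], and let q̄ be the conjugate exponent of q. Then the zero vector is a minimizer of g(x) = (1/2)‖x − v‖₂² + λ‖x‖_q over ℝⁿ if and only if λ ≥ ‖v‖_{q̄}. -/
/-!
Comparing `g (t • x)` with `g 0` and letting `t → 0⁺`, which kills the quadratic term, shows that
`0` minimizes `g` iff `∑ i, x i * v i ≤ λ‖x‖_q` for every `x`. By Hölder's inequality this holds
when `‖v‖_{q̄} ≤ λ`; conversely, testing it on a vector attaining equality in Hölder's inequality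
(`sign v · |v|^(q̄-1)`, or the signed unit vectors `sign (v i) · e_i` when `q = 1`) gives
`‖v‖_{q̄} ≤ λ`. In other words, `‖·‖_{q̄}` is the dual norm of `‖·‖_q`.
-/

open scoped ENNReal BigOperators

/-- The vector ℓq norm for q ∈ [1,∞]. -/
noncomputable def lqNorm {n : ℕ} (q : ℝ≥0∞) (x : Fin n → ℝ) : ℝ :=
  if q = ⊤ then ⨆ i, |x i| else (∑ i, |x i| ^ q.toReal) ^ (1 / q.toReal)

/-- The objective `g(x) = (1/2)‖x − v‖₂² + λ‖x‖_q`. -/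
noncomputable def gObj {n : ℕ} (q : ℝ≥0∞) (lam : ℝ) (v x : Fin n → ℝ) : ℝ :=
  (1 / 2) * ∑ i, (x i - v i) ^ 2 + lam * lqNorm q x

open MeasureTheory Filter Topology

section LqNorm

variable {n : ℕ} {q qb : ℝ≥0∞}

lemma lqNorm_eq_toReal_eLpNorm (hq : q ≠ 0) (x : Fin n → ℝ) :
    lqNorm q x = (eLpNorm x q Measure.count).toReal := by
  unfold lqNorm
  split_ifs with htop
  · subst htop
    simp [eLpNorm_exponent_top, ENNReal.toReal_iSup]
  · rw [eLpNorm_eq_lintegral_rpow_enorm_toReal hq htop]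
    simp [lintegral_count, ← ENNReal.toReal_rpow, ENNReal.toReal_sum]

lemma lqNorm_nonneg (hq : q ≠ 0) (x : Fin n → ℝ) : 0 ≤ lqNorm q x := by
  rw [lqNorm_eq_toReal_eLpNorm hq]
  exact ENNReal.toReal_nonneg

lemma lqNorm_smul (hq : q ≠ 0) (t : ℝ) (x : Fin n → ℝ) :
    lqNorm q (t • x) = |t| * lqNorm q x := by
  simp [lqNorm_eq_toReal_eLpNorm hq, eLpNorm_const_smul]

lemma lqNorm_zero (hq : q ≠ 0) : lqNorm q (0 : Fin n → ℝ) = 0 := by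
  simp [lqNorm_eq_toReal_eLpNorm hq]

lemma lqNorm_one (x : Fin n → ℝ) : lqNorm 1 x = ∑ i, |x i| := by
  simp [lqNorm]

lemma lqNorm_top (x : Fin n → ℝ) : lqNorm ⊤ x = ⨆ i, |x i| := if_pos rfl

lemma lqNorm_of_ne_top (hq : q ≠ ⊤) (x : Fin n → ℝ) :
    lqNorm q x = (∑ i, |x i| ^ q.toReal) ^ (1 / q.toReal) := if_neg hq

lemma sum_mul_le_lqNorm_mul_lqNorm [q.HolderConjugate qb] (x v : Fin n → ℝ) :
    ∑ i, x i * v i ≤ lqNorm q x * lqNorm qb v := by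
  have holder := eLpNorm_le_eLpNorm_mul_eLpNorm'_of_norm (μ := Measure.count) (p := q) (q := qb)
    (r := 1) (f := x) (g := v) .of_discrete .of_discrete (· * ·) 1 (.of_forall fun i => by simp)
  have hfin : ∀ (p : ℝ≥0∞) (y : Fin n → ℝ), eLpNorm y p Measure.count ≠ ⊤ := fun _ _ =>
    (eLpNorm_count_lt_top_of_lt fun _ => enorm_lt_top).ne
  calc ∑ i, x i * v i ≤ ∑ i, |x i * v i| := Finset.sum_le_sum fun i _ => le_abs_self _
    _ = lqNorm 1 (fun i => x i * v i) := (lqNorm_one _).symm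
    _ ≤ lqNorm q x * lqNorm qb v := by
      simp only [lqNorm_eq_toReal_eLpNorm one_ne_zero,
        lqNorm_eq_toReal_eLpNorm (ENNReal.HolderConjugate.ne_zero q qb),
        lqNorm_eq_toReal_eLpNorm (ENNReal.HolderConjugate.ne_zero qb q), ← ENNReal.toReal_mul]
      exact ENNReal.toReal_mono (ENNReal.mul_ne_top (hfin _ _) (hfin _ _)) (by simpa using holder)

end LqNorm

lemma abs_sign_le_one (a : ℝ) : |(SignType.sign a : ℝ)| ≤ 1 := by
  rcases lt_trichotomy a 0 with h | h | h <;> simp [h]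

section DualNorm

variable {ι : Type*} [Fintype ι] {v : ι → ℝ} {lam : ℝ}

lemma iSup_abs_le_of_forall_sum_mul_le (hlam : 0 ≤ lam)
    (h : ∀ x : ι → ℝ, ∑ i, x i * v i ≤ lam * ∑ i, |x i|) : ⨆ i, |v i| ≤ lam := by
  refine Real.iSup_le (fun i => ?_) hlam
  classical
  have hi := h (Pi.single i (SignType.sign (v i) : ℝ))
  simp only [Pi.single_apply, ite_mul, zero_mul, Finset.sum_ite_eq', Finset.mem_univ, if_true,
    sign_mul_self, apply_ite abs, abs_zero] at hi
  calc |v i| ≤ lam * |(SignType.sign (v i) : ℝ)| := hi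
    _ ≤ lam * 1 := by gcongr; exact abs_sign_le_one _
    _ = lam := mul_one lam

lemma sum_abs_le_of_forall_sum_mul_le (hlam : 0 ≤ lam)
    (h : ∀ x : ι → ℝ, ∑ i, x i * v i ≤ lam * ⨆ i, |x i|) : ∑ i, |v i| ≤ lam := by
  have hv := h fun i => SignType.sign (v i)
  simp only [sign_mul_self] at hv
  calc ∑ i, |v i| ≤ lam * ⨆ i, |(SignType.sign (v i) : ℝ)| := hv
    _ ≤ lam * 1 := by gcongr; exact Real.iSup_le (fun i => abs_sign_le_one _) zero_le_one
    _ = lam := mul_one lam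

lemma rpow_sum_le_of_forall_sum_mul_le {p pb : ℝ} (hpq : p.HolderConjugate pb) (hlam : 0 ≤ lam)
    (h : ∀ x : ι → ℝ, ∑ i, x i * v i ≤ lam * (∑ i, |x i| ^ p) ^ (1 / p)) :
    (∑ i, |v i| ^ pb) ^ (1 / pb) ≤ lam := by
  set S := ∑ i, |v i| ^ pb
  set w : ι → ℝ := fun i => SignType.sign (v i) * |v i| ^ (pb - 1)
  have hwv : ∀ i, w i * v i = |v i| ^ pb := fun i => by
    calc w i * v i = |v i| ^ (pb - 1) * (SignType.sign (v i) * v i) := by ring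
      _ = |v i| ^ (pb - 1 + 1) := by
        rw [sign_mul_self, Real.rpow_add_one' (abs_nonneg _) (by simp [hpq.symm.ne_zero])]
      _ = |v i| ^ pb := by rw [sub_add_cancel]
  have hw : ∀ i, |w i| ^ p ≤ |v i| ^ pb := fun i => by
    calc |w i| ^ p ≤ (|v i| ^ (pb - 1)) ^ p := by
          refine Real.rpow_le_rpow (abs_nonneg _) ?_ hpq.nonneg
          rw [abs_mul, abs_of_nonneg (Real.rpow_nonneg (abs_nonneg _) _)]
          exact mul_le_of_le_one_left (by positivity) (abs_sign_le_one _)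
      _ = |v i| ^ pb := by rw [← Real.rpow_mul (abs_nonneg _), hpq.symm.sub_one_mul_conj]
  have hS : S ≤ lam * S ^ (1 / p) := by
    calc S = ∑ i, w i * v i := by simp only [hwv, S]
      _ ≤ lam * (∑ i, |w i| ^ p) ^ (1 / p) := h w
      _ ≤ lam * S ^ (1 / p) :=
          mul_le_mul_of_nonneg_left (Real.rpow_le_rpow (by positivity)
            (Finset.sum_le_sum fun i _ => hw i) (one_div_nonneg.mpr hpq.nonneg)) hlam
  rcases (show 0 ≤ S by positivity).eq_or_lt with hS0 | hS0
  · rw [← hS0, Real.zero_rpow (one_div_ne_zero hpq.symm.ne_zero)]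
    exact hlam
  · refine le_of_mul_le_mul_right ?_ (Real.rpow_pos_of_pos hS0 (1 / p))
    rwa [← Real.rpow_add hS0, add_comm, hpq.one_div_add_one_div, one_div_one, Real.rpow_one]

end DualNorm

section Duality

variable {n : ℕ} {q qb : ℝ≥0∞} {lam : ℝ}

lemma lqNorm_le_of_forall_sum_mul_le [q.HolderConjugate qb] {v : Fin n → ℝ} (hlam : 0 ≤ lam)
    (h : ∀ x : Fin n → ℝ, ∑ i, x i * v i ≤ lam * lqNorm q x) : lqNorm qb v ≤ lam := by
  rcases eq_or_ne q ⊤ with rfl | hq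
  · obtain rfl : qb = 1 := (ENNReal.HolderConjugate.eq_top_iff_eq_one ⊤ qb).mp rfl
    rw [lqNorm_one]
    exact sum_abs_le_of_forall_sum_mul_le hlam (by simpa only [lqNorm_top] using h)
  rcases eq_or_ne qb ⊤ with rfl | hqb
  · obtain rfl : q = 1 := (ENNReal.HolderConjugate.eq_top_iff_eq_one ⊤ q).mp rfl
    rw [lqNorm_top]
    exact iSup_abs_le_of_forall_sum_mul_le hlam (by simpa only [lqNorm_one] using h)
  rw [lqNorm_of_ne_top hqb]
  exact rpow_sum_le_of_forall_sum_mul_le (ENNReal.HolderConjugate.toReal_of_ne_top hq hqb) hlam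
    (by simpa only [lqNorm_of_ne_top hq] using h)

theorem lqNorm_le_iff_forall_sum_mul_le [q.HolderConjugate qb] (hlam : 0 ≤ lam) (v : Fin n → ℝ) :
    lqNorm qb v ≤ lam ↔ ∀ x : Fin n → ℝ, ∑ i, x i * v i ≤ lam * lqNorm q x := by
  refine ⟨fun h x => (sum_mul_le_lqNorm_mul_lqNorm (q := q) (qb := qb) x v).trans ?_,
    lqNorm_le_of_forall_sum_mul_le hlam⟩
  rw [mul_comm lam]
  exact mul_le_mul_of_nonneg_left h (lqNorm_nonneg (ENNReal.HolderConjugate.ne_zero q qb) x)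

end Duality

lemma forall_sum_mul_le_half_sq_add_iff {ι : Type*} [Fintype ι] {N : (ι → ℝ) → ℝ}
    (hN : ∀ t : ℝ, 0 < t → ∀ x, N (t • x) = t * N x) (v : ι → ℝ) :
    (∀ x : ι → ℝ, ∑ i, x i * v i ≤ (∑ i, x i ^ 2) / 2 + N x) ↔
      ∀ x : ι → ℝ, ∑ i, x i * v i ≤ N x := by
  refine ⟨fun h x => ?_, fun h x => (h x).trans (le_add_of_nonneg_left (by positivity))⟩
  set Q := (∑ i, x i ^ 2) / 2
  have hscaled : ∀ t > 0, ∑ i, x i * v i ≤ t * Q + N x := fun t ht => by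
    have hx := h (t • x)
    simp only [Pi.smul_apply, smul_eq_mul, mul_pow, mul_assoc, ← Finset.mul_sum, hN t ht] at hx
    refine le_of_mul_le_mul_left ?_ ht
    linear_combination hx
  have hlim : Tendsto (fun t => t * Q + N x) (𝓝[>] 0) (𝓝 (N x)) := by
    have hcont : Continuous fun t : ℝ => t * Q + N x := by fun_prop
    simpa using (hcont.tendsto 0).mono_left nhdsWithin_le_nhds
  exact ge_of_tendsto hlim (eventually_nhdsWithin_of_forall hscaled)

lemma gObj_sub_gObj_zero {n : ℕ} {q : ℝ≥0∞} (hq : q ≠ 0) (lam : ℝ) (v y : Fin n → ℝ) :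
    gObj q lam v y - gObj q lam v 0 =
      (∑ i, y i ^ 2) / 2 - ∑ i, y i * v i + lam * lqNorm q y := by
  have hsq : ∀ i, (y i - v i) ^ 2 = y i ^ 2 - 2 * (y i * v i) + v i ^ 2 := fun i => by ring
  simp only [gObj, lqNorm_zero hq, hsq, Pi.zero_apply, zero_sub, neg_sq, mul_zero, add_zero,
    Finset.sum_add_distrib, Finset.sum_sub_distrib, ← Finset.mul_sum]
  ring

theorem stmt1_general {n : ℕ} (v : Fin n → ℝ) (lam : ℝ) (hlam : 0 < lam)
    (q qb : ℝ≥0∞) (hconj : 1 / q + 1 / qb = 1) :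
    (∀ y : Fin n → ℝ, gObj q lam v 0 ≤ gObj q lam v y) ↔ lqNorm qb v ≤ lam := by
  have : q.HolderConjugate qb :=
    ENNReal.holderConjugate_iff.mpr (by simpa only [one_div] using hconj)
  have hq : q ≠ 0 := ENNReal.HolderConjugate.ne_zero q qb
  rw [lqNorm_le_iff_forall_sum_mul_le (q := q) hlam.le,
    ← forall_sum_mul_le_half_sq_add_iff (N := fun x => lam * lqNorm q x)
      (fun t ht x => by rw [lqNorm_smul hq, abs_of_pos ht, mul_left_comm])]
  refine forall_congr' fun y => ?_
  rw [← sub_nonneg, gObj_sub_gObj_zero hq]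
  constructor <;> intro h <;> linarith

/-- Let `v ∈ ℝⁿ`, `λ > 0` and `q ∈ [1,∞]`, with conjugate exponent `q̄`
(`1/q + 1/q̄ = 1`).  The zero vector is a minimizer of
`g(x) = (1/2)‖x − v‖₂² + λ‖x‖_q` over `ℝⁿ` iff `λ ≥ ‖v‖_{q̄}`. -/
theorem stmt1 {n : ℕ} (v : Fin n → ℝ) (lam : ℝ) (hlam : 0 < lam)
    (q qb : ℝ≥0∞) (hq : 1 ≤ q) (hconj : 1 / q + 1 / qb = 1) :
    (∀ y : Fin n → ℝ, gObj q lam v 0 ≤ gObj q lam v y) ↔ lqNorm qb v ≤ lam :=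
  stmt1_general v lam hlam q qb hconj
end

section
/- Let 1 < q < ∞, v ∈ ℝⁿ with vᵢ > 0 for all i, and 0 < λ < ‖v‖_{q̄}. For c ≥ 0 let ωᵢ^{−1}(c) denote the unique x ∈ (0, vᵢ] with x + c·x^{q−1} = vᵢ, set ψ(c) = (Σᵢ (ωᵢ^{−1}(c))^q)^{(1−q)/q} and φ(c) = λψ(c) − c. Let ε = (‖v‖_{q̄} − λ)/‖v‖_{q̄}, cᵢ = (vᵢ − vᵢε)/(vᵢε)^{q−1} and c̄ = maxᵢ cᵢ. Then φ is continuous on [0, ∞), φ(0) = λ‖v‖_q^{1−q} > 0, and φ(c̄) ≤ 0. -/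
open scoped BigOperators

noncomputable def lqNormR {n : ℕ} (q : ℝ) (x : Fin n → ℝ) : ℝ :=
  (∑ i, |x i| ^ q) ^ (1 / q)

lemma winv_lip (q : ℝ) (hq : 1 < q) (vi : ℝ) (hvi : 0 < vi) (w : ℝ → ℝ)
    (hw : ∀ c : ℝ, 0 ≤ c → w c ∈ Set.Ioc (0 : ℝ) vi ∧ w c + c * w c ^ (q - 1) = vi) :
    ∀ c ∈ Set.Ici (0:ℝ), ∀ c' ∈ Set.Ici (0:ℝ), w c - w c' ≤ vi ^ (q - 1) * |c - c'| := by
  intro c hc c' hc'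
  obtain ⟨⟨hx0, hxv⟩, hxeq⟩ := hw c hc
  obtain ⟨⟨hy0, hyv⟩, hyeq⟩ := hw c' hc'
  have hq1 : (0:ℝ) ≤ q - 1 := by linarith
  rcases le_or_gt (w c) (w c') with h | h
  · have h1 : (0:ℝ) ≤ vi ^ (q - 1) * |c - c'| := by positivity
    linarith
  · have hyx : w c' ^ (q - 1) ≤ w c ^ (q - 1) :=
      Real.rpow_le_rpow hy0.le h.le hq1
    have h2 : c * w c' ^ (q - 1) ≤ c * w c ^ (q - 1) :=
      mul_le_mul_of_nonneg_left hyx hc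
    have h3 : c' - c ≤ |c - c'| := by
      rw [abs_sub_comm]; exact le_abs_self _
    have h4 : w c' ^ (q - 1) ≤ vi ^ (q - 1) :=
      Real.rpow_le_rpow hy0.le hyv hq1
    have h5 : (0:ℝ) ≤ w c' ^ (q - 1) := Real.rpow_nonneg hy0.le _
    nlinarith [abs_nonneg (c - c')]

lemma winv_contOn (q : ℝ) (hq : 1 < q) (vi : ℝ) (hvi : 0 < vi) (w : ℝ → ℝ)
    (hw : ∀ c : ℝ, 0 ≤ c → w c ∈ Set.Ioc (0 : ℝ) vi ∧ w c + c * w c ^ (q - 1) = vi) :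
    ContinuousOn w (Set.Ici 0) := by
  have hK : (0:ℝ) ≤ vi ^ (q - 1) := Real.rpow_nonneg hvi.le _
  refine LipschitzOnWith.continuousOn (K := Real.toNNReal (vi ^ (q - 1))) ?_
  refine LipschitzOnWith.of_dist_le_mul ?_
  intro c hc c' hc'
  rw [Real.dist_eq, Real.dist_eq, Real.coe_toNNReal _ hK]
  rw [abs_sub_le_iff]
  refine ⟨winv_lip q hq vi hvi w hw c hc c' hc', ?_⟩
  rw [abs_sub_comm]
  exact winv_lip q hq vi hvi w hw c' hc' c hc

/-- Let `1 < q < ∞`, `v ∈ ℝⁿ` with `vᵢ > 0`, and `0 < λ < ‖v‖_{q̄}`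
(`q̄ = q/(q−1)`).  For `c ≥ 0` let `ωᵢ⁻¹(c)` denote the unique `x ∈ (0, vᵢ]`
with `x + c·x^{q−1} = vᵢ`, set `ψ(c) = (∑ᵢ (ωᵢ⁻¹(c))^q)^{(1−q)/q}` and
`φ(c) = λψ(c) − c`.  With `ε = (‖v‖_{q̄} − λ)/‖v‖_{q̄}`,
`cᵢ = (vᵢ − vᵢε)/(vᵢε)^{q−1}` and `c̄ = maxᵢ cᵢ`, the function `φ` is
continuous on `[0, ∞)`, `φ(0) = λ‖v‖_q^{1−q} > 0`, and `φ(c̄) ≤ 0`. -/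
theorem stmt7 {n : ℕ} [NeZero n] (q : ℝ) (hq : 1 < q)
    (v : Fin n → ℝ) (hv : ∀ i, 0 < v i) (lam : ℝ)
    (hlam : 0 < lam) (hlam' : lam < lqNormR (q / (q - 1)) v)
    (winv : Fin n → ℝ → ℝ)
    (hwinv : ∀ i, ∀ c : ℝ, 0 ≤ c →
      winv i c ∈ Set.Ioc (0 : ℝ) (v i) ∧
        winv i c + c * winv i c ^ (q - 1) = v i) :
    let eps : ℝ := (lqNormR (q / (q - 1)) v - lam) / lqNormR (q / (q - 1)) v
    let cc : Fin n → ℝ := fun i => (v i - v i * eps) / (v i * eps) ^ (q - 1)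
    let cbar : ℝ := Finset.univ.sup' Finset.univ_nonempty cc
    let phi : ℝ → ℝ := fun c => lam * (∑ i, winv i c ^ q) ^ ((1 - q) / q) - c
    ContinuousOn phi (Set.Ici 0) ∧
      phi 0 = lam * lqNormR q v ^ (1 - q) ∧ 0 < phi 0 ∧ phi cbar ≤ 0 := by
  intro eps cc cbar phi
  have hq0 : (0:ℝ) < q := by linarith
  have hq1 : (0:ℝ) < q - 1 := by linarith
  have hqb : (0:ℝ) < q / (q - 1) := by positivity
  have hN : 0 < lqNormR (q / (q - 1)) v := hlam.trans hlam'
  set N : ℝ := lqNormR (q / (q - 1)) v with hNdef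
  have heps0 : 0 < eps := div_pos (by linarith) hN
  have heps1 : eps < 1 := by
    rw [show eps = (N - lam) / N from rfl, div_lt_one hN]; linarith
  have hlamN : lam = (1 - eps) * N := by
    have : eps * N = N - lam := by
      rw [show eps = (N - lam) / N from rfl, div_mul_cancel₀ _ hN.ne']
    nlinarith
  have hSpos : ∀ c : ℝ, 0 ≤ c → 0 < ∑ i, winv i c ^ q := by
    intro c hc
    exact Finset.sum_pos (fun i _ => Real.rpow_pos_of_pos (hwinv i c hc).1.1 q)
      Finset.univ_nonempty
  constructor
  · -- continuity
    have hS : ContinuousOn (fun c => ∑ i, winv i c ^ q) (Set.Ici 0) := by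
      refine continuousOn_finset_sum _ (fun i _ => ?_)
      exact (winv_contOn q hq (v i) (hv i) (winv i) (hwinv i)).rpow_const
        (fun x hx => Or.inl (ne_of_gt (hwinv i x hx).1.1))
    have h1 : ContinuousOn (fun c => (∑ i, winv i c ^ q) ^ ((1 - q) / q)) (Set.Ici 0) :=
      hS.rpow_const (fun x hx => Or.inl (ne_of_gt (hSpos x hx)))
    exact ((continuousOn_const.mul h1).sub continuousOn_id)
  have hw0 : ∀ i, winv i 0 = v i := by
    intro i
    have := (hwinv i 0 le_rfl).2
    simpa using this
  have hphi0 : phi 0 = lam * lqNormR q v ^ (1 - q) := by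
    have hsum : (∑ i, winv i 0 ^ q) = ∑ i, |v i| ^ q :=
      Finset.sum_congr rfl fun i _ => by rw [hw0 i, abs_of_pos (hv i)]
    have hT : (0:ℝ) ≤ ∑ i, |v i| ^ q :=
      Finset.sum_nonneg fun i _ => Real.rpow_nonneg (abs_nonneg _) _
    show lam * (∑ i, winv i 0 ^ q) ^ ((1 - q) / q) - 0
        = lam * lqNormR q v ^ (1 - q)
    rw [sub_zero, hsum, lqNormR, ← Real.rpow_mul hT,
      show (1/q * (1-q)) = (1-q)/q from by ring]
  refine ⟨hphi0, ?_, ?_⟩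
  · rw [hphi0]
    have hT : (0:ℝ) < ∑ i, |v i| ^ q :=
      Finset.sum_pos (fun i _ => Real.rpow_pos_of_pos (abs_pos.mpr (hv i).ne') _)
        Finset.univ_nonempty
    have h2 : (0:ℝ) < lqNormR q v := Real.rpow_pos_of_pos hT _
    positivity
  · -- phi cbar ≤ 0
    have hcc0 : ∀ i, 0 ≤ cc i := by
      intro i
      have h1 : (0:ℝ) ≤ v i - v i * eps := by nlinarith [hv i]
      have h2 : (0:ℝ) < (v i * eps) ^ (q - 1) :=
        Real.rpow_pos_of_pos (mul_pos (hv i) heps0) _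
      exact div_nonneg h1 h2.le
    have hcbar0 : 0 ≤ cbar := by
      obtain ⟨i⟩ := (inferInstance : Nonempty (Fin n))
      exact le_trans (hcc0 i) (Finset.le_sup' cc (Finset.mem_univ i))
    set w : Fin n → ℝ := fun i => winv i cbar with hwdef
    have hwprop : ∀ i, w i ∈ Set.Ioc (0:ℝ) (v i) ∧ w i + cbar * w i ^ (q-1) = v i :=
      fun i => hwinv i cbar hcbar0
    have hwle : ∀ i, w i ≤ v i * eps := by
      intro i
      by_contra h
      push_neg at h
      have hve : (0:ℝ) < v i * eps := mul_pos (hv i) heps0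
      have h1 : (v i * eps) ^ (q - 1) ≤ w i ^ (q - 1) :=
        Real.rpow_le_rpow hve.le h.le hq1.le
      have h2 : cc i * (v i * eps) ^ (q - 1) = v i - v i * eps := by
        rw [show cc i = (v i - v i * eps) / (v i * eps) ^ (q - 1) from rfl]
        exact div_mul_cancel₀ _ (ne_of_gt (Real.rpow_pos_of_pos hve _))
      have h3 : cc i ≤ cbar := Finset.le_sup' cc (Finset.mem_univ i)
      have h4 : cc i * (v i * eps) ^ (q - 1) ≤ cbar * w i ^ (q - 1) := by
        calc cc i * (v i * eps) ^ (q - 1) ≤ cc i * w i ^ (q - 1) :=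
              mul_le_mul_of_nonneg_left h1 (hcc0 i)
          _ ≤ cbar * w i ^ (q - 1) :=
              mul_le_mul_of_nonneg_right h3 (Real.rpow_nonneg (hwprop i).1.1.le _)
      have h5 := (hwprop i).2
      linarith
    set S : ℝ := ∑ i, w i ^ q with hSdef
    have hS : 0 < S := hSpos cbar hcbar0
    have hqbq : (q - 1) * (q / (q - 1)) = q := by field_simp
    have h1e : (0:ℝ) ≤ 1 - eps := by linarith
    have hTnn : (0:ℝ) ≤ ∑ i, |v i| ^ (q / (q - 1)) :=
      Finset.sum_nonneg fun i _ => Real.rpow_nonneg (abs_nonneg _) _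
    have hinv : (q / (q - 1)) * (1 / (q / (q - 1))) = 1 :=
      mul_one_div_cancel hqb.ne'
    have step1 : (1 - eps) * (∑ i, |v i| ^ (q / (q - 1))) ^ (1 / (q / (q - 1)))
        = ((1 - eps) ^ (q / (q - 1)) * ∑ i, |v i| ^ (q / (q - 1))) ^ (1 / (q / (q - 1))) := by
      rw [Real.mul_rpow (Real.rpow_nonneg h1e _) hTnn, ← Real.rpow_mul h1e,
        hinv, Real.rpow_one]
    have step1' : (1 - eps) ^ (q / (q - 1)) * ∑ i, |v i| ^ (q / (q - 1))
        = ∑ i, ((1 - eps) * v i) ^ (q / (q - 1)) := by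
      rw [Finset.mul_sum]
      refine Finset.sum_congr rfl fun i _ => ?_
      rw [abs_of_pos (hv i), ← Real.mul_rpow h1e (hv i).le]
    have step2 : (∑ i, ((1 - eps) * v i) ^ (q / (q - 1)))
        ≤ ∑ i, (v i - w i) ^ (q / (q - 1)) := by
      refine Finset.sum_le_sum fun i _ => ?_
      refine Real.rpow_le_rpow (mul_nonneg h1e (hv i).le) ?_ hqb.le
      nlinarith [hwle i]
    have step3 : (∑ i, (v i - w i) ^ (q / (q - 1))) = cbar ^ (q / (q - 1)) * S := by
      rw [hSdef, Finset.mul_sum]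
      refine Finset.sum_congr rfl fun i _ => ?_
      have heq : v i - w i = cbar * w i ^ (q - 1) := by linarith [(hwprop i).2]
      rw [heq, Real.mul_rpow hcbar0 (Real.rpow_nonneg (hwprop i).1.1.le _),
        ← Real.rpow_mul (hwprop i).1.1.le, hqbq]
    have step4 : (cbar ^ (q / (q - 1)) * S) ^ (1 / (q / (q - 1)))
        = cbar * S ^ ((q - 1) / q) := by
      rw [Real.mul_rpow (Real.rpow_nonneg hcbar0 _) hS.le, ← Real.rpow_mul hcbar0,
        hinv, Real.rpow_one, one_div_div]
    have hkey : lam ≤ cbar * S ^ ((q - 1) / q) := by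
      calc lam = (1 - eps) * N := hlamN
        _ = (∑ i, ((1 - eps) * v i) ^ (q / (q - 1))) ^ (1 / (q / (q - 1))) := by
            rw [hNdef, lqNormR, step1, step1']
        _ ≤ (∑ i, (v i - w i) ^ (q / (q - 1))) ^ (1 / (q / (q - 1))) := by
            refine Real.rpow_le_rpow ?_ step2 (by positivity)
            exact Finset.sum_nonneg fun i _ =>
              Real.rpow_nonneg (mul_nonneg h1e (hv i).le) _
        _ = (cbar ^ (q / (q - 1)) * S) ^ (1 / (q / (q - 1))) := by rw [step3]
        _ = cbar * S ^ ((q - 1) / q) := step4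
    have hfin : cbar * S ^ ((q - 1) / q) * S ^ ((1 - q) / q) = cbar := by
      rw [mul_assoc, ← Real.rpow_add hS,
        show ((q - 1) / q + (1 - q) / q) = 0 from by ring, Real.rpow_zero, mul_one]
    have hmul := mul_le_mul_of_nonneg_right hkey (Real.rpow_nonneg hS.le ((1 - q) / q))
    show lam * S ^ ((1 - q) / q) - cbar ≤ 0
    linarith [hmul, hfin.ge, hfin.le]
end

section
/- Let v ∈ ℝⁿ and 0 < λ < ‖v‖₁. Then the function h(t) = Σᵢ max(|vᵢ| − t, 0) − λ has a unique root t* ≥ 0, and the minimizer of g(x) = (1/2)‖x − v‖₂² + λ‖x‖_∞ over ℝⁿ is x* = sgn(v) ⊙ min(|v|, t*), where min, sgn, |·| and ⊙ act componentwise. -/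
open scoped BigOperators

private lemma keyE (a s t : ℝ) :
    (1/2) * max (a - t) 0 ^ 2 - max (a - t) 0 * (s - t) ≤ (1/2) * max (a - s) 0 ^ 2 := by
  rcases le_total (a - t) 0 with h1 | h1 <;> rcases le_total (a - s) 0 with h2 | h2
  · rw [max_eq_right h1, max_eq_right h2]; nlinarith
  · rw [max_eq_right h1, max_eq_left h2]; nlinarith
  · rw [max_eq_left h1, max_eq_right h2]; nlinarith [mul_nonneg (by linarith : (0:ℝ) ≤ 2*s - t - a) (by linarith : (0:ℝ) ≤ a - t)]
  · rw [max_eq_left h1, max_eq_left h2]; nlinarith [sq_nonneg (s - t)]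

private lemma lemD (b y s : ℝ) (hy : |y| ≤ s) : max (|b| - s) 0 ^ 2 ≤ (y - b) ^ 2 := by
  rcases le_total (|b| - s) 0 with h1 | h1
  · rw [max_eq_right h1]; simpa using sq_nonneg (y - b)
  · rw [max_eq_left h1]
    have h2 : |b| - s ≤ |y - b| := by
      have h3 := abs_sub_abs_le_abs_sub b y
      have h4 : |b - y| = |y - b| := abs_sub_comm _ _
      linarith
    calc (|b| - s) ^ 2 ≤ |y - b| ^ 2 := by nlinarith [abs_nonneg (y - b)]
      _ = (y - b) ^ 2 := sq_abs _

private lemma lemC (b t : ℝ) (ht : 0 ≤ t) :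
    (Real.sign b * min (|b|) t - b) ^ 2 = max (|b| - t) 0 ^ 2 := by
  rcases lt_trichotomy b 0 with hb | hb | hb
  · rw [Real.sign_of_neg hb, abs_of_neg hb]
    rcases le_total (-b) t with hle | hle
    · rw [min_eq_left hle, max_eq_right (by linarith)]; ring
    · rw [min_eq_right hle, max_eq_left (by linarith)]; ring
  · simp [hb, max_eq_right (by linarith : -t ≤ 0)]
  · rw [Real.sign_of_pos hb, abs_of_pos hb]
    rcases le_total b t with hle | hle
    · rw [min_eq_left hle, max_eq_right (by linarith)]; ring
    · rw [min_eq_right hle, max_eq_left (by linarith)]; ring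

/-- Let `v ∈ ℝⁿ` and `0 < λ < ‖v‖₁.`  Then `h(t) = ∑ᵢ max(|vᵢ| − t, 0) − λ`
has a unique root `t* ≥ 0`, and the minimizer of
`g(x) = (1/2)‖x − v‖₂² + λ‖x‖_∞` over `ℝⁿ` is
`x* = sgn(v) ⊙ min(|v|, t*)` (componentwise). -/
theorem stmt11 {n : ℕ} (v : Fin n → ℝ) (lam : ℝ) (hlam : 0 < lam)
    (hlam' : lam < ∑ i, |v i|) :
    let h : ℝ → ℝ := fun t => (∑ i, max (|v i| - t) 0) - lam
    let g : (Fin n → ℝ) → ℝ := fun x =>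
      (1 / 2) * ∑ i, (x i - v i) ^ 2 + lam * ⨆ i, |x i|
    (∃! t : ℝ, 0 ≤ t ∧ h t = 0) ∧
      ∀ tstar : ℝ, 0 ≤ tstar → h tstar = 0 →
        (∀ y : Fin n → ℝ,
            g (fun i => Real.sign (v i) * min (|v i|) tstar) ≤ g y) ∧
          ∀ x : Fin n → ℝ, (∀ y : Fin n → ℝ, g x ≤ g y) →
            x = fun i => Real.sign (v i) * min (|v i|) tstar := by
  intro h g
  haveI hne : Nonempty (Fin n) := by
    rcases Nat.eq_zero_or_pos n with h0 | h0
    · subst h0; simp at hlam'; linarith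
    · exact Fin.pos_iff_nonempty.mp h0
  have hbdd : ∀ f : Fin n → ℝ, BddAbove (Set.range f) := fun f =>
    (Set.finite_range f).bddAbove
  -- basic facts about h
  have hcont : Continuous h := by
    apply Continuous.sub _ continuous_const
    exact continuous_finset_sum _ fun i _ =>
      (continuous_const.sub continuous_id).max continuous_const
  have h0pos : 0 < h 0 := by
    have : ∀ i ∈ Finset.univ, max (|v i| - 0) 0 = |v i| := fun i _ => by
      rw [sub_zero]; exact max_eq_left (abs_nonneg _)
    simp only [h]
    rw [Finset.sum_congr rfl this]; linarith
  set M := ∑ i, |v i| with hM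
  have hMpos : 0 < M := lt_trans hlam hlam'
  have hMneg : h M < 0 := by
    have : ∀ i ∈ Finset.univ, max (|v i| - M) 0 = 0 := fun i _ => by
      have hle : |v i| ≤ M :=
        Finset.single_le_sum (f := fun j => |v j|) (fun j _ => abs_nonneg _) (Finset.mem_univ i)
      exact max_eq_right (by linarith)
    simp only [h]
    rw [Finset.sum_congr rfl this]; simp; linarith
  -- strict decrease past any root
  have hstrict : ∀ t s : ℝ, h t = 0 → t < s → h s < 0 := by
    intro t s ht hts
    have hsum : ∑ i, max (|v i| - t) 0 = lam := by
      simp only [h] at ht; linarith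
    have hex : ∃ i, 0 < max (|v i| - t) 0 := by
      by_contra hc
      push_neg at hc
      have : ∑ i, max (|v i| - t) 0 ≤ 0 := Finset.sum_nonpos fun i _ => hc i
      linarith
    obtain ⟨i0, hi0⟩ := hex
    have hi0' : t < |v i0| := by
      by_contra hc; push_neg at hc
      rw [max_eq_right (by linarith)] at hi0; linarith
    have hlt : ∑ i, max (|v i| - s) 0 < ∑ i, max (|v i| - t) 0 := by
      refine Finset.sum_lt_sum (fun i _ => max_le_max (by linarith) le_rfl)
        ⟨i0, Finset.mem_univ i0, ?_⟩
      rw [max_eq_left (by linarith : (0:ℝ) ≤ |v i0| - t)]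
      exact max_lt (by linarith) (by linarith)
    simp only [h]; linarith
  -- existence of a root
  have hiv := intermediate_value_Icc' (le_of_lt hMpos) hcont.continuousOn
  obtain ⟨t0, ht0mem, ht0⟩ := hiv ⟨le_of_lt hMneg, le_of_lt h0pos⟩
  have huniq : ∀ t₁ t₂ : ℝ, 0 ≤ t₁ → h t₁ = 0 → 0 ≤ t₂ → h t₂ = 0 → t₁ = t₂ := by
    intro t₁ t₂ h₁ e₁ h₂ e₂
    rcases lt_trichotomy t₁ t₂ with hlt | heq | hlt
    · exact absurd e₂ (ne_of_lt (hstrict t₁ t₂ e₁ hlt))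
    · exact heq
    · exact absurd e₁ (ne_of_lt (hstrict t₂ t₁ e₂ hlt))
  constructor
  · exact ⟨t0, ⟨ht0mem.1, ht0⟩, fun y hy => huniq y t0 hy.1 hy.2 ht0mem.1 ht0⟩
  -- the minimizer part
  intro tstar htpos htroot
  set xs : Fin n → ℝ := fun i => Real.sign (v i) * min (|v i|) tstar with hxs
  have hsum_t : ∑ i, max (|v i| - tstar) 0 = lam := by
    simp only [h] at htroot; linarith
  have habs : ∀ i, |xs i| = min (|v i|) tstar := by
    intro i
    have hmn : 0 ≤ min (|v i|) tstar := le_min (abs_nonneg _) htpos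
    rcases lt_trichotomy (v i) 0 with hv | hv | hv
    · rw [hxs]; simp only [Real.sign_of_neg hv]
      rw [abs_mul, abs_of_nonneg hmn]; simp
    · rw [hxs]; simp [hv, min_eq_left htpos]
    · rw [hxs]; simp only [Real.sign_of_pos hv]
      rw [abs_mul, abs_of_nonneg hmn]; simp
  have hex2 : ∃ i0, tstar < |v i0| := by
    have hex : ∃ i, 0 < max (|v i| - tstar) 0 := by
      by_contra hc
      push_neg at hc
      have : ∑ i, max (|v i| - tstar) 0 ≤ 0 := Finset.sum_nonpos fun i _ => hc i
      linarith
    obtain ⟨i0, hi0⟩ := hex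
    refine ⟨i0, ?_⟩
    by_contra hc; push_neg at hc
    rw [max_eq_right (by linarith)] at hi0; linarith
  have hsup : (⨆ i, |xs i|) = tstar := by
    apply le_antisymm
    · exact ciSup_le fun i => by rw [habs i]; exact min_le_right _ _
    · obtain ⟨i0, hi0⟩ := hex2
      have heq : |xs i0| = tstar := by rw [habs i0, min_eq_right (le_of_lt hi0)]
      rw [← heq]; exact le_ciSup (f := fun i => |xs i|) (hbdd _) i0
  have hsq : ∀ i, (xs i - v i) ^ 2 = max (|v i| - tstar) 0 ^ 2 := fun i =>
    lemC (v i) tstar htpos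
  have hgxs : g xs = (1/2) * ∑ i, max (|v i| - tstar) 0 ^ 2 + lam * tstar := by
    simp only [g]
    rw [hsup, Finset.sum_congr rfl fun i _ => hsq i]
  -- optimality
  have hopt : ∀ y : Fin n → ℝ, g xs ≤ g y := by
    intro y
    set s := ⨆ i, |y i| with hs
    have hyle : ∀ i, |y i| ≤ s := fun i => le_ciSup (f := fun i => |y i|) (hbdd _) i
    have key : ∀ i ∈ Finset.univ,
        (1/2) * max (|v i| - tstar) 0 ^ 2 - max (|v i| - tstar) 0 * (s - tstar)
          ≤ (1/2) * (y i - v i) ^ 2 := fun i _ => by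
      refine le_trans (keyE (|v i|) s tstar) ?_
      nlinarith [lemD (v i) (y i) s (hyle i)]
    have Ssum := Finset.sum_le_sum key
    rw [Finset.sum_sub_distrib, ← Finset.mul_sum, ← Finset.sum_mul, hsum_t,
      ← Finset.mul_sum] at Ssum
    have hgy : g y = (1/2) * ∑ i, (y i - v i) ^ 2 + lam * s := by
      simp only [g, hs]
    rw [hgxs, hgy]; nlinarith
  refine ⟨hopt, ?_⟩
  -- uniqueness of the minimizer
  intro x hxmin
  have heq : g x = g xs := le_antisymm (hxmin xs) (hopt x)
  by_contra hnex
  obtain ⟨i0, hi0⟩ := Function.ne_iff.mp hnex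
  set m : Fin n → ℝ := fun i => (x i + xs i) / 2 with hm
  have hquad : ∑ i, (m i - v i) ^ 2 =
      (1/2) * ∑ i, (x i - v i) ^ 2 + (1/2) * ∑ i, (xs i - v i) ^ 2
        - (1/4) * ∑ i, (x i - xs i) ^ 2 := by
    rw [Finset.mul_sum, Finset.mul_sum, Finset.mul_sum, ← Finset.sum_add_distrib,
      ← Finset.sum_sub_distrib]
    exact Finset.sum_congr rfl fun i _ => by simp only [hm]; ring
  have hsupm : (⨆ i, |m i|) ≤ ((⨆ i, |x i|) + ⨆ i, |xs i|) / 2 := by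
    refine ciSup_le fun i => ?_
    have h1 : |x i| ≤ ⨆ j, |x j| := le_ciSup (f := fun j => |x j|) (hbdd _) i
    have h2 : |xs i| ≤ ⨆ j, |xs j| := le_ciSup (f := fun j => |xs j|) (hbdd _) i
    have h3 : |m i| ≤ (|x i| + |xs i|) / 2 := by
      simp only [hm]
      rw [abs_div]
      have := abs_add_le (x i) (xs i)
      have h4 : |(2:ℝ)| = 2 := by norm_num
      rw [h4]
      linarith
    linarith
  have hpos : 0 < ∑ i, (x i - xs i) ^ 2 := by
    refine Finset.sum_pos' (fun i _ => sq_nonneg _) ⟨i0, Finset.mem_univ i0, ?_⟩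
    exact lt_of_le_of_ne (sq_nonneg _) (Ne.symm (pow_ne_zero 2 (sub_ne_zero.mpr hi0)))
  have hgm : g m = (1/2) * ∑ i, (m i - v i) ^ 2 + lam * ⨆ i, |m i| := rfl
  have hgx : g x = (1/2) * ∑ i, (x i - v i) ^ 2 + lam * ⨆ i, |x i| := rfl
  have hgxs2 : g xs = (1/2) * ∑ i, (xs i - v i) ^ 2 + lam * ⨆ i, |xs i| := rfl
  have hmul := mul_le_mul_of_nonneg_left hsupm (le_of_lt hlam)
  have hlt : g m < g x := by
    rw [hgm, hgx]
    rw [hgx, hgxs2] at heq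
    nlinarith [hquad]
  exact absurd (hxmin m) (not_le.mpr hlt)
end

section
/- Let 0 < λ'' < λ' < λ_max, let θ*(λ') and θ*(λ'') be the Euclidean projections of Y/λ' and Y/λ'' onto the dual feasible set ℱ, and set a = (1/2)(Y/λ'' − θ*(λ')), b = Y/λ' − θ*(λ') (note b ≠ 0 since λ' < λ_max implies Y/λ' ∉ ℱ), v = a − (⟨a,b⟩/‖b‖₂²)·b, and o = θ*(λ') + v. Then ‖θ*(λ'') − o‖₂ ≤ ‖v‖₂. -/
open scoped ENNReal BigOperators
open Matrix

private lemma lqNorm_scale {n : ℕ} {pr : ℝ} (hpr : 1 ≤ pr) {c : ℝ} (hc : 0 ≤ c)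
    (x : Fin n → ℝ) :
    (∑ i, |c * x i| ^ pr) ^ (1 / pr) = c * (∑ i, |x i| ^ pr) ^ (1 / pr) := by
  have hpr0 : pr ≠ 0 := by linarith
  have hsum : (0 : ℝ) ≤ ∑ i, |x i| ^ pr :=
    Finset.sum_nonneg fun i _ => Real.rpow_nonneg (abs_nonneg _) _
  have h1 : ∀ i : Fin n, |c * x i| ^ pr = c ^ pr * |x i| ^ pr := by
    intro i
    rw [abs_mul, abs_of_nonneg hc, Real.mul_rpow hc (abs_nonneg _)]
  simp_rw [h1]
  rw [← Finset.mul_sum, Real.mul_rpow (Real.rpow_nonneg hc _) hsum,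
    ← Real.rpow_mul hc, mul_one_div_cancel hpr0, Real.rpow_one]

/-- Convexity inequality for `lqNorm`. -/
private lemma lqNorm_combo {n : ℕ} {q : ℝ≥0∞} (hq1 : 1 ≤ q) (x y : Fin n → ℝ)
    {t : ℝ} (ht0 : 0 ≤ t) (ht1 : t ≤ 1) :
    lqNorm q (fun i => (1 - t) * x i + t * y i)
      ≤ (1 - t) * lqNorm q x + t * lqNorm q y := by
  have ht0' : (0 : ℝ) ≤ 1 - t := by linarith
  unfold lqNorm
  split_ifs with htop
  · rcases isEmpty_or_nonempty (Fin n) with h | h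
    · simp [Real.iSup_of_isEmpty]
    · apply ciSup_le
      intro i
      have hx : |x i| ≤ ⨆ j, |x j| := le_ciSup (f := fun j => |x j|) (Finite.bddAbove_range _) i
      have hy : |y i| ≤ ⨆ j, |y j| := le_ciSup (f := fun j => |y j|) (Finite.bddAbove_range _) i
      calc |(1 - t) * x i + t * y i| ≤ |(1 - t) * x i| + |t * y i| := abs_add_le _ _
        _ = (1 - t) * |x i| + t * |y i| := by
            rw [abs_mul, abs_mul, abs_of_nonneg ht0', abs_of_nonneg ht0]
        _ ≤ (1 - t) * (⨆ j, |x j|) + t * (⨆ j, |y j|) := by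
            gcongr
  · have hqtop : q ≠ ⊤ := htop
    have hpr : 1 ≤ q.toReal := by
      have := ENNReal.toReal_mono hqtop hq1
      simpa using this
    calc (∑ i, |(1 - t) * x i + t * y i| ^ q.toReal) ^ (1 / q.toReal)
        ≤ (∑ i, |(1 - t) * x i| ^ q.toReal) ^ (1 / q.toReal)
          + (∑ i, |t * y i| ^ q.toReal) ^ (1 / q.toReal) :=
          Real.Lp_add_le Finset.univ (fun i => (1 - t) * x i) (fun i => t * y i) hpr
      _ = (1 - t) * (∑ i, |x i| ^ q.toReal) ^ (1 / q.toReal)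
          + t * (∑ i, |y i| ^ q.toReal) ^ (1 / q.toReal) := by
          rw [lqNorm_scale hpr ht0', lqNorm_scale hpr ht0]

private lemma lqNorm_zero_le_one {n : ℕ} (q : ℝ≥0∞) :
    lqNorm q (fun _ : Fin n => (0 : ℝ)) ≤ 1 := by
  unfold lqNorm
  split_ifs
  · rcases isEmpty_or_nonempty (Fin n) with h | h
    · simp
    · simp [ciSup_const]
  · rcases eq_or_ne q.toReal 0 with h0 | h0
    · simp [h0]
    · simp [Real.zero_rpow h0, Real.zero_rpow (one_div_ne_zero h0), Real.zero_rpow (inv_ne_zero h0)]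

/-- Variational inequality from minimality along a segment. -/
private lemma varineq {m : ℕ} (z θ₁ θ₂ : Fin m → ℝ)
    (hmin : ∀ t : ℝ, 0 ≤ t → t ≤ 1 →
      ∑ k, (z k - θ₁ k) ^ 2 ≤ ∑ k, (z k - ((1 - t) * θ₁ k + t * θ₂ k)) ^ 2) :
    ∑ k, (z k - θ₁ k) * (θ₂ k - θ₁ k) ≤ 0 := by
  set δ := ∑ k, (z k - θ₁ k) * (θ₂ k - θ₁ k) with hδdef
  set C := ∑ k, (θ₂ k - θ₁ k) ^ 2 with hCdef
  have hC : 0 ≤ C := Finset.sum_nonneg fun k _ => sq_nonneg _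
  have key : ∀ t : ℝ, 0 ≤ t → t ≤ 1 → 2 * t * δ ≤ t ^ 2 * C := by
    intro t ht0 ht1
    have h := hmin t ht0 ht1
    have expand : ∑ k, (z k - ((1 - t) * θ₁ k + t * θ₂ k)) ^ 2
        = ∑ k, (z k - θ₁ k) ^ 2 - 2 * t * δ + t ^ 2 * C := by
      rw [hδdef, hCdef, Finset.mul_sum, Finset.mul_sum, ← Finset.sum_sub_distrib,
        ← Finset.sum_add_distrib]
      exact Finset.sum_congr rfl fun k _ => by ring
    rw [expand] at h
    linarith
  by_contra hcon
  push_neg at hcon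
  rcases eq_or_lt_of_le hC with hC0 | hCpos
  · have := key 1 zero_le_one le_rfl
    rw [← hC0] at this
    nlinarith
  · set t := min 1 (δ / C) with htdef
    have htpos : 0 < t := lt_min one_pos (div_pos hcon hCpos)
    have ht1 : t ≤ 1 := min_le_left _ _
    have htC : t * C ≤ δ := by
      have : t ≤ δ / C := min_le_right _ _
      calc t * C ≤ (δ / C) * C := by gcongr
        _ = δ := by field_simp
    have hk := key t htpos.le ht1
    nlinarith

/-- Let `0 < λ'' < λ' < λ_max`, let `θ*(λ')` and `θ*(λ'')` be the Euclidean
projections of `Y/λ'` and `Y/λ''` onto the dual feasible set `ℱ`, and set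
`a = (1/2)(Y/λ'' − θ*(λ'))`, `b = Y/λ' − θ*(λ')`,
`v = a − (⟨a,b⟩/‖b‖₂²)·b`, `o = θ*(λ') + v`.  Then
`‖θ*(λ'') − o‖₂ ≤ ‖v‖₂`. -/
theorem stmt15 {m s : ℕ} [NeZero s] (p : Fin s → ℕ)
    (B : (i : Fin s) → Matrix (Fin m) (Fin (p i)) ℝ) (Y : Fin m → ℝ)
    (q qb : ℝ≥0∞) (hq : 1 ≤ q) (hconj : 1 / q + 1 / qb = 1)
    (lam' lam'' : ℝ) (h0 : 0 < lam'') (h1 : lam'' < lam')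
    (h2 : lam' < Finset.univ.sup' Finset.univ_nonempty
        (fun i => lqNorm qb ((B i)ᵀ.mulVec Y)))
    (θp' θp'' : Fin m → ℝ)
    (hθp'F : ∀ i, lqNorm qb ((B i)ᵀ.mulVec θp') ≤ 1)
    (hθp'Proj : ∀ θ : Fin m → ℝ, (∀ i, lqNorm qb ((B i)ᵀ.mulVec θ) ≤ 1) →
      ∑ k, (Y k / lam' - θp' k) ^ 2 ≤ ∑ k, (Y k / lam' - θ k) ^ 2)
    (hθp''F : ∀ i, lqNorm qb ((B i)ᵀ.mulVec θp'') ≤ 1)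
    (hθp''Proj : ∀ θ : Fin m → ℝ, (∀ i, lqNorm qb ((B i)ᵀ.mulVec θ) ≤ 1) →
      ∑ k, (Y k / lam'' - θp'' k) ^ 2 ≤ ∑ k, (Y k / lam'' - θ k) ^ 2) :
    let a : Fin m → ℝ := fun k => 1 / 2 * (Y k / lam'' - θp' k)
    let b : Fin m → ℝ := fun k => Y k / lam' - θp' k
    let vv : Fin m → ℝ := fun k =>
      a k - ((∑ j, a j * b j) / ∑ j, b j ^ 2) * b k
    let o : Fin m → ℝ := fun k => θp' k + vv k
    Real.sqrt (∑ k, (θp'' k - o k) ^ 2) ≤ Real.sqrt (∑ k, vv k ^ 2) := by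
  intro a b vv o
  have ha : ∀ k, a k = 1 / 2 * (Y k / lam'' - θp' k) := fun k => rfl
  have hb : ∀ k, b k = Y k / lam' - θp' k := fun k => rfl
  have hvv : ∀ k, vv k = a k - ((∑ j, a j * b j) / ∑ j, b j ^ 2) * b k := fun k => rfl
  have ho : ∀ k, o k = θp' k + vv k := fun k => rfl
  have hlam' : (0 : ℝ) < lam' := h0.trans h1
  -- qb ≥ 1
  have hqb1 : (1 : ℝ≥0∞) ≤ qb := by
    have h1qb : 1 / qb ≤ 1 := by
      calc 1 / qb ≤ 1 / q + 1 / qb := le_add_self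
        _ = 1 := hconj
    rwa [one_div, ENNReal.inv_le_one] at h1qb
  -- convexity of the feasible set
  have hconv : ∀ θ₁ θ₂ : Fin m → ℝ,
      (∀ i, lqNorm qb ((B i)ᵀ.mulVec θ₁) ≤ 1) →
      (∀ i, lqNorm qb ((B i)ᵀ.mulVec θ₂) ≤ 1) →
      ∀ t : ℝ, 0 ≤ t → t ≤ 1 →
      ∀ i, lqNorm qb ((B i)ᵀ.mulVec (fun k => (1 - t) * θ₁ k + t * θ₂ k)) ≤ 1 := by
    intro θ₁ θ₂ hθ₁ hθ₂ t ht0 ht1 i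
    have hlin : (B i)ᵀ.mulVec (fun k => (1 - t) * θ₁ k + t * θ₂ k)
        = fun j => (1 - t) * (B i)ᵀ.mulVec θ₁ j + t * (B i)ᵀ.mulVec θ₂ j := by
      funext j
      simp only [Matrix.mulVec, dotProduct, Finset.mul_sum, ← Finset.sum_add_distrib]
      exact Finset.sum_congr rfl fun k _ => by ring
    rw [hlin]
    calc lqNorm qb (fun j => (1 - t) * (B i)ᵀ.mulVec θ₁ j + t * (B i)ᵀ.mulVec θ₂ j)
        ≤ (1 - t) * lqNorm qb ((B i)ᵀ.mulVec θ₁) + t * lqNorm qb ((B i)ᵀ.mulVec θ₂) :=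
          lqNorm_combo hqb1 _ _ ht0 ht1
      _ ≤ (1 - t) * 1 + t * 1 := by
          have := hθ₁ i; have := hθ₂ i
          gcongr <;> linarith
      _ = 1 := by ring
  -- feasibility of 0
  have hzeroF : ∀ i, lqNorm qb ((B i)ᵀ.mulVec (fun _ => (0 : ℝ))) ≤ 1 := by
    intro i
    have hz : (B i)ᵀ.mulVec (fun _ => (0 : ℝ)) = fun _ => (0 : ℝ) := by
      funext j
      simp [Matrix.mulVec, dotProduct]
    rw [hz]
    exact lqNorm_zero_le_one qb
  -- variational inequalities
  have V1 : ∑ k, (Y k / lam'' - θp'' k) * (θp' k - θp'' k) ≤ 0 := by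
    apply varineq
    intro t ht0 ht1
    exact hθp''Proj _ (hconv θp'' θp' hθp''F hθp'F t ht0 ht1)
  have V2 : ∑ k, (Y k / lam' - θp' k) * (θp'' k - θp' k) ≤ 0 := by
    apply varineq
    intro t ht0 ht1
    exact hθp'Proj _ (hconv θp' θp'' hθp'F hθp''F t ht0 ht1)
  have V3 : ∑ k, (Y k / lam' - θp' k) * ((fun _ => (0 : ℝ)) k - θp' k) ≤ 0 := by
    apply varineq
    intro t ht0 ht1
    exact hθp'Proj _ (hconv θp' (fun _ => 0) hθp'F hzeroF t ht0 ht1)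
  -- abbreviations
  set A1 := ∑ k, (θp'' k - θp' k) * a k with hA1
  set A2 := ∑ k, (θp'' k - θp' k) * b k with hA2
  set A3 := ∑ j, a j * b j with hA3
  set A4 := ∑ j, b j ^ 2 with hA4
  set A5 := ∑ k, (θp'' k - θp' k) ^ 2 with hA5
  set A7 := ∑ k, b k * θp' k with hA7
  set t₀ := A3 / A4 with ht₀
  have hA4nn : 0 ≤ A4 := Finset.sum_nonneg fun k _ => sq_nonneg _
  -- A5 ≤ 2 * A1
  have F1 : A5 ≤ 2 * A1 := by
    have hid : 2 * A1 - A5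
        = -(∑ k, (Y k / lam'' - θp'' k) * (θp' k - θp'' k)) := by
      rw [hA1, hA5, Finset.mul_sum, ← Finset.sum_sub_distrib, ← Finset.sum_neg_distrib]
      exact Finset.sum_congr rfl fun k _ => by rw [ha]; ring
    linarith
  -- A2 ≤ 0
  have F2 : A2 ≤ 0 := by
    have hid : A2 = ∑ k, (Y k / lam' - θp' k) * (θp'' k - θp' k) := by
      rw [hA2]
      exact Finset.sum_congr rfl fun k _ => by rw [hb]; ring
    linarith [hid ▸ V2]
  -- A7 ≥ 0
  have F7 : 0 ≤ A7 := by
    have hid : ∑ k, (Y k / lam' - θp' k) * ((fun _ => (0 : ℝ)) k - θp' k) = -A7 := by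
      rw [hA7, ← Finset.sum_neg_distrib]
      exact Finset.sum_congr rfl fun k _ => by rw [hb]; ring
    rw [hid] at V3
    linarith
  -- A3 ≥ 0
  have F3 : 0 ≤ A3 := by
    have hid : 2 * A3 = (1 / lam'' - 1 / lam') * (∑ k, Y k * b k) + A4 := by
      rw [hA3, hA4, Finset.mul_sum, Finset.mul_sum, ← Finset.sum_add_distrib]
      exact Finset.sum_congr rfl fun k _ => by rw [ha, hb]; ring
    have hid2 : ∑ k, Y k * b k = lam' * A4 + lam' * A7 := by
      rw [hA4, hA7, Finset.mul_sum, Finset.mul_sum, ← Finset.sum_add_distrib]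
      refine Finset.sum_congr rfl fun k _ => ?_
      rw [hb]
      field_simp
      ring
    have hfrac : 0 ≤ 1 / lam'' - 1 / lam' := by
      have : 1 / lam' ≤ 1 / lam'' := one_div_le_one_div_of_le h0 h1.le
      linarith
    have hYb : 0 ≤ ∑ k, Y k * b k := by
      rw [hid2]
      have := mul_nonneg hlam'.le hA4nn
      have := mul_nonneg hlam'.le F7
      linarith
    nlinarith
  have ht₀nn : 0 ≤ t₀ := div_nonneg F3 hA4nn
  -- main inequality on squared norms
  apply Real.sqrt_le_sqrt
  have expand : ∑ k, (θp'' k - o k) ^ 2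
      = A5 - 2 * A1 + 2 * t₀ * A2 + ∑ k, vv k ^ 2 := by
    rw [hA5, hA1, hA2, Finset.mul_sum, Finset.mul_sum, ← Finset.sum_sub_distrib,
      ← Finset.sum_add_distrib, ← Finset.sum_add_distrib]
    refine Finset.sum_congr rfl fun k _ => ?_
    rw [ho, hvv]
    ring
  rw [expand]
  have h2t : t₀ * A2 ≤ 0 := mul_nonpos_of_nonneg_of_nonpos ht₀nn F2
  linarith
end
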